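/- A compact subset A of [0,1] is an attractor of a system of n weak contractions on [0,1] if and only if A × {0}^{d-1} is an attractor of a system of n weak contractions on [0,1]^d. -/

import Mathlib

open Metric Set Topology Filter TopologicalSpace

noncomputable section

/-- The unit cube `[0,1]^d` with the Euclidean metric. -/
abbrev unitCube (d : ℕ) : Type :=
  {x : EuclideanSpace ℝ (Fin d) // ∀ i, x i ∈ Set.Icc (0:ℝ) 1}

/-- A contraction: a Lipschitz map with constant `< 1`. -/
def IsContraction {X : Type*} [MetricSpace X] (f : X → X) : Prop :=
  ∃ L : NNReal, L < 1 ∧ LipschitzWith L f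

/-- A weak contraction: `d(f x, f y) < d(x, y)` for `x ≠ y`. -/
def IsWeakContraction {X : Type*} [MetricSpace X] (f : X → X) : Prop :=
  ∀ x y, x ≠ y → dist (f x) (f y) < dist x y

/-- `Ld n d`: attractors of IFSs of `n` contractions on `[0,1]^d`,
as a subset of the hyperspace of nonempty compact sets. -/
def Ld (n d : ℕ) : Set (NonemptyCompacts (unitCube d)) :=
  {A | ∃ f : Fin n → unitCube d → unitCube d,
    (∀ i, IsContraction (f i)) ∧
      (A : Set (unitCube d)) = ⋃ i, f i '' (A : Set (unitCube d))}

/-- `wLd n d`: attractors of systems of `n` weak contractions on `[0,1]^d`. -/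
def wLd (n d : ℕ) : Set (NonemptyCompacts (unitCube d)) :=
  {A | ∃ f : Fin n → unitCube d → unitCube d,
    (∀ i, IsWeakContraction (f i)) ∧
      (A : Set (unitCube d)) = ⋃ i, f i '' (A : Set (unitCube d))}

def IFSd (d : ℕ) : Set (NonemptyCompacts (unitCube d)) := ⋃ n, Ld n d

def wIFSd (d : ℕ) : Set (NonemptyCompacts (unitCube d)) := ⋃ n, wLd n d

/-- The embedding `[0,1] → [0,1]^d`, `a ↦ (a,0,…,0)`. -/
def emb (d : ℕ) (hd : 0 < d) (x : unitCube 1) : unitCube d :=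
  ⟨(WithLp.toLp 2 (fun i => if i = (⟨0, hd⟩ : Fin d) then x.1 0 else 0) : EuclideanSpace ℝ (Fin d)),
    fun i => by
      dsimp only [WithLp.ofLp_toLp]
      split_ifs
      · exact x.2 0
      · exact ⟨le_refl 0, zero_le_one⟩⟩

/-- The projection `[0,1]^d → [0,1]` onto the first coordinate. -/
def projL (d : ℕ) (hd : 0 < d) (x : unitCube d) : unitCube 1 :=
  ⟨(WithLp.toLp 2 (fun _ => x.1 ⟨0, hd⟩) : EuclideanSpace ℝ (Fin 1)), fun _ => x.2 ⟨0, hd⟩⟩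

/-!
An isometric embedding `e : X → Y` with a `1`-Lipschitz left inverse `p` transports systems of weak
contractions both ways: `f ↦ e ∘ f ∘ p` and `g ↦ p ∘ g ∘ e`. Since `p ∘ e = id`, these conjugations
carry `A = ⋃ fᵢ[A]` to `e[A] = ⋃ (e ∘ fᵢ ∘ p)[e[A]]` and back. For `[0,1] ⊆ [0,1]^d` take `e = emb`
and `p = projL`.
-/

section Retract

variable {X Y : Type*} {e : X → Y} {p : Y → X}

theorem image_eq_iUnion_conj_image (hpe : Function.LeftInverse p e) {ι : Type*} {f : ι → X → X}
    {A : Set X} (hA : A = ⋃ i, f i '' A) : e '' A = ⋃ i, (e ∘ f i ∘ p) '' (e '' A) := by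
  simp only [image_comp, hpe.image_image]
  conv_lhs => rw [hA]
  exact image_iUnion

theorem eq_iUnion_restrict_image (hpe : Function.LeftInverse p e) {ι : Type*} {g : ι → Y → Y}
    {A : Set X} (hA : e '' A = ⋃ i, g i '' (e '' A)) : A = ⋃ i, (p ∘ g i ∘ e) '' A := by
  conv_lhs => rw [← hpe.image_image A, hA, image_iUnion]
  simp only [image_comp]

variable [MetricSpace X] [MetricSpace Y]

theorem IsWeakContraction.conj_retract (he : Isometry e) (hp : LipschitzWith 1 p) {f : X → X}
    (hf : IsWeakContraction f) : IsWeakContraction (e ∘ f ∘ p) := by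
  intro x y hxy
  by_cases hpxy : p x = p y
  · simpa [hpxy] using hxy
  · calc dist (e (f (p x))) (e (f (p y))) = dist (f (p x)) (f (p y)) := he.dist_eq _ _
      _ < dist (p x) (p y) := hf _ _ hpxy
      _ ≤ dist x y := by simpa using hp.dist_le_mul x y

theorem IsWeakContraction.restrict_retract (he : Isometry e) (hp : LipschitzWith 1 p) {g : Y → Y}
    (hg : IsWeakContraction g) : IsWeakContraction (p ∘ g ∘ e) := by
  intro x y hxy
  calc dist (p (g (e x))) (p (g (e y))) ≤ dist (g (e x)) (g (e y)) := by
        simpa using hp.dist_le_mul _ _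
    _ < dist (e x) (e y) := hg _ _ (he.injective.ne hxy)
    _ = dist x y := he.dist_eq x y

theorem exists_weakContraction_attractor_iff_image (he : Isometry e) (hp : LipschitzWith 1 p)
    (hpe : Function.LeftInverse p e) (ι : Type*) (A : Set X) :
    (∃ f : ι → X → X, (∀ i, IsWeakContraction (f i)) ∧ A = ⋃ i, f i '' A) ↔
      ∃ g : ι → Y → Y, (∀ i, IsWeakContraction (g i)) ∧ e '' A = ⋃ i, g i '' (e '' A) := by
  constructor
  · rintro ⟨f, hf, hA⟩
    exact ⟨fun i => e ∘ f i ∘ p, fun i => (hf i).conj_retract he hp,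
      image_eq_iUnion_conj_image hpe hA⟩
  · rintro ⟨g, hg, hA⟩
    exact ⟨fun i => p ∘ g i ∘ e, fun i => (hg i).restrict_retract he hp,
      eq_iUnion_restrict_image hpe hA⟩

end Retract

section UnitCube

variable (d : ℕ) (hd : 0 < d)

theorem projL_emb : Function.LeftInverse (projL d hd) (emb d hd) := by
  intro x
  ext i
  rw [Subsingleton.elim i 0]
  simp [projL, emb]

theorem isometry_emb : Isometry (emb d hd) := by
  refine Isometry.of_dist_eq fun x y => ?_
  rw [Subtype.dist_eq, Subtype.dist_eq, EuclideanSpace.dist_eq, EuclideanSpace.dist_eq,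
    Fin.sum_univ_one, Finset.sum_eq_single (⟨0, hd⟩ : Fin d)]
  · simp [emb]
  · intro i _ hi
    simp [emb, hi]
  · simp

theorem lipschitzWith_one_projL : LipschitzWith 1 (projL d hd) := by
  refine LipschitzWith.mk_one fun x y => ?_
  rw [Subtype.dist_eq, Subtype.dist_eq, EuclideanSpace.dist_eq, EuclideanSpace.dist_eq,
    Fin.sum_univ_one]
  exact Real.sqrt_le_sqrt <| Finset.single_le_sum (f := fun i => dist (x.1 i) (y.1 i) ^ 2)
    (fun i _ => by positivity) (Finset.mem_univ (⟨0, hd⟩ : Fin d))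

end UnitCube

theorem stmt5_general (n d : ℕ) (hd : 0 < d)
    (A : Set (unitCube 1)) :
    (∃ f : Fin n → unitCube 1 → unitCube 1,
      (∀ i, IsWeakContraction (f i)) ∧ A = ⋃ i, f i '' A) ↔
    (∃ g : Fin n → unitCube d → unitCube d,
      (∀ i, IsWeakContraction (g i)) ∧ emb d hd '' A = ⋃ i, g i '' (emb d hd '' A)) :=
  exists_weakContraction_attractor_iff_image (isometry_emb d hd) (lipschitzWith_one_projL d hd)
    (projL_emb d hd) (Fin n) A

theorem stmt5 (n d : ℕ) (hn : 0 < n) (hd : 0 < d)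
    (A : Set (unitCube 1)) (hA : IsCompact A) (hAne : A.Nonempty) :
    (∃ f : Fin n → unitCube 1 → unitCube 1,
      (∀ i, IsWeakContraction (f i)) ∧ A = ⋃ i, f i '' A) ↔
    (∃ g : Fin n → unitCube d → unitCube d,
      (∀ i, IsWeakContraction (g i)) ∧ emb d hd '' A = ⋃ i, g i '' (emb d hd '' A)) :=
  stmt5_general n d hd A
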